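/- arXiv:1111.3911 — 4 statements merged into one kernel-verified Lean document; each statement's English description precedes it below -/
import Mathlib

section
/- Filling inequality for cubical cochains on a cube: let d' ≥ 1, 1 ≤ k ≤ d', n ≥ 1, and let α be a k-dimensional integer cochain on the standard cubical partition of the cube {0,…,n}^{d'} which is a cocycle (δα = 0). Then there exists a (k−1)-dimensional integer cochain β on the same cubical complex with δβ = α and with norm |β| ≤ (d'−k+1) · n · |α|. -/
/-- A `k`-dimensional face of the standard cubical partition of the cube `{0,…,n}^d`:
a pair `(S, x)` of a direction set `S ⊆ {1,…,d}` with `|S| = k` and a base point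
`x ∈ {0,…,n}^d` with `x i ≤ n − 1` for all `i ∈ S`.  Its vertex set is
`{ x + Σ_{i∈S} ε_i e_i : ε ∈ {0,1}^S }`. -/
def CubFace (d n k : ℕ) : Type :=
  {p : Finset (Fin d) × (Fin d → Fin (n + 1)) //
    p.1.card = k ∧ ∀ i ∈ p.1, (p.2 i : ℕ) < n}

instance (d n k : ℕ) : Fintype (CubFace d n k) := by
  unfold CubFace; infer_instance

/-- The point `x + e_i` obtained by increasing the `i`-th coordinate of `x` by one. -/
def vshift {d n : ℕ} (x : Fin d → Fin (n + 1)) (i : Fin d) : Fin d → Fin (n + 1) :=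
  fun j => if j = i then x j + 1 else x j

/-- The cubical coboundary of a `k`-cochain `β`, a `(k+1)`-cochain given by
`(δβ)(S, x) = Σ_{i∈S} (−1)^{|{j∈S : j<i}|} ( β(S∖{i}, x + e_i) − β(S∖{i}, x) )`. -/
def coboundary {d n k : ℕ} (β : CubFace d n k → ℤ) (f : CubFace d n (k + 1)) : ℤ :=
  ∑ i ∈ f.1.1.attach,
    (-1 : ℤ) ^ (f.1.1.filter (fun j => j < i.1)).card *
      (β ⟨(f.1.1.erase i.1, vshift f.1.2 i.1), by
            refine ⟨by simp [Finset.card_erase_of_mem i.2, f.2.1], ?_⟩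
            intro j hj
            have hji : j ≠ i.1 := Finset.ne_of_mem_erase hj
            simpa [vshift, hji] using f.2.2 j (Finset.mem_of_mem_erase hj)⟩ -
        β ⟨(f.1.1.erase i.1, f.1.2), by
            exact ⟨by simp [Finset.card_erase_of_mem i.2, f.2.1],
              fun j hj => f.2.2 j (Finset.mem_of_mem_erase hj)⟩⟩)

/-- The norm of a cochain: the sum of absolute values of its values over all faces. -/
def cochainNorm {d n k : ℕ} (α : CubFace d n k → ℤ) : ℕ :=
  ∑ f : CubFace d n k, (α f).natAbs

namespace Filling

variable {d n : ℕ}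

open Fin.NatCast

abbrev Pt (d n : ℕ) := Fin d → Fin (n + 1)
abbrev Coch (d n : ℕ) := Finset (Fin d) → Pt d n → ℤ

def sgn (S : Finset (Fin d)) (i : Fin d) : ℤ := (-1) ^ (S.filter (fun j => j < i)).card

def dP (A : Coch d n) (S : Finset (Fin d)) (x : Pt d n) : ℤ :=
  ∑ i ∈ S, sgn S i * (A (S.erase i) (vshift x i) - A (S.erase i) x)

def normP (A : Coch d n) : ℕ := ∑ S : Finset (Fin d), ∑ x : Pt d n, (A S x).natAbs

/-! ### signed interval sums -/

def ssum (f : ℕ → ℤ) (a b : ℕ) : ℤ :=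
  (∑ t ∈ Finset.Ico b a, f t) - ∑ t ∈ Finset.Ico a b, f t

lemma ssum_succ (f : ℕ → ℤ) (a b : ℕ) : ssum f (a + 1) b = ssum f a b + f a := by
  rcases le_or_gt b a with h | h
  · rw [ssum, ssum, Finset.sum_Ico_succ_top h,
      Finset.Ico_eq_empty (show ¬ (a+1) < b by omega),
      Finset.Ico_eq_empty (show ¬ a < b by omega)]
    ring
  · rw [ssum, ssum, Finset.sum_eq_sum_Ico_succ_bot h,
      Finset.Ico_eq_empty (show ¬ b < a + 1 by omega),
      Finset.Ico_eq_empty (show ¬ b < a by omega)]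
    ring

lemma ssum_tele (g : ℕ → ℤ) (a b : ℕ) (h : a ≤ b) :
    ∑ t ∈ Finset.Ico a b, (g (t + 1) - g t) = g b - g a := by
  rw [Finset.sum_Ico_eq_sum_range]
  have h2 := Finset.sum_range_sub (fun j => g (a + j)) (b - a)
  have h3 : ∀ j, g (a + (j + 1)) = g (a + j + 1) := fun j => by rw [Nat.add_assoc]
  simp only [h3] at h2
  rw [h2, Nat.add_sub_cancel' h, Nat.add_zero]

lemma ssum_sub (g : ℕ → ℤ) (a b : ℕ) :
    ssum (fun t => g (t + 1) - g t) a b = g a - g b := by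
  rcases le_total a b with h | h
  · rw [ssum, Finset.Ico_eq_empty (show ¬ b < a by omega), ssum_tele g a b h]; simp
  · rw [ssum, Finset.Ico_eq_empty (show ¬ a < b by omega), ssum_tele g b a h]; simp

lemma ssum_congr {f g : ℕ → ℤ} (a b : ℕ) (h : ∀ t, t < max a b → f t = g t) :
    ssum f a b = ssum g a b := by
  rw [ssum, ssum]
  congr 1
  · exact Finset.sum_congr rfl fun t ht => h t (by have := Finset.mem_Ico.1 ht; omega)
  · exact Finset.sum_congr rfl fun t ht => h t (by have := Finset.mem_Ico.1 ht; omega)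

lemma ssum_sum {ι : Type*} (s : Finset ι) (F : ι → ℕ → ℤ) (a b : ℕ) :
    ssum (fun t => ∑ i ∈ s, F i t) a b = ∑ i ∈ s, ssum (F i) a b := by
  simp [ssum, Finset.sum_sub_distrib]
  rw [Finset.sum_comm, Finset.sum_comm (s := Finset.Ico a b)]

lemma ssum_natAbs_le (f : ℕ → ℤ) (a b : ℕ) :
    (ssum f a b).natAbs ≤ ∑ t ∈ Finset.Ico (min a b) (max a b), (f t).natAbs := by
  rcases le_total a b with h | h
  · rw [ssum, Finset.Ico_eq_empty (show ¬ b < a by omega), min_eq_left h, max_eq_right h]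
    simpa using nat_abs_sum_le (Finset.Ico a b) f
  · rw [ssum, Finset.Ico_eq_empty (show ¬ a < b by omega), min_eq_right h, max_eq_left h]
    simpa using nat_abs_sum_le (Finset.Ico b a) f

lemma ssum_eq_zero {f : ℕ → ℤ} {a b : ℕ}
    (h : ∀ t ∈ Finset.Ico (min a b) (max a b), f t = 0) : ssum f a b = 0 := by
  have h1 : ∀ t ∈ Finset.Ico b a, f t = 0 := fun t ht => by
    refine h t ?_
    rcases le_total a b with hab | hab
    · simp [Finset.mem_Ico] at ht ⊢; omega
    · simp [Finset.mem_Ico, min_eq_right hab, max_eq_left hab] at ht ⊢; omega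
  have h2 : ∀ t ∈ Finset.Ico a b, f t = 0 := fun t ht => by
    refine h t ?_
    rcases le_total a b with hab | hab
    · simp [Finset.mem_Ico, min_eq_left hab, max_eq_right hab] at ht ⊢; omega
    · simp [Finset.mem_Ico] at ht ⊢; omega
  rw [ssum, Finset.sum_eq_zero h1, Finset.sum_eq_zero h2, sub_zero]

/-! ### point helpers -/

lemma vshift_self (x : Pt d n) (i : Fin d) : vshift x i i = x i + 1 := by simp [vshift]

lemma vshift_ne (x : Pt d n) {i j : Fin d} (h : j ≠ i) : vshift x i j = x j := by
  simp [vshift, h]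

lemma update_vshift (x : Pt d n) {i ℓ : Fin d} (h : i ≠ ℓ) (u : Fin (n+1)) :
    Function.update (vshift x i) ℓ u = vshift (Function.update x ℓ u) i := by
  funext j
  rcases eq_or_ne j ℓ with rfl | hj
  · rw [Function.update_self, vshift_ne _ h.symm, Function.update_self]
  · rw [Function.update_of_ne hj]
    rcases eq_or_ne j i with rfl | hi
    · rw [vshift_self, vshift_self, Function.update_of_ne hj]
    · rw [vshift_ne _ hi, vshift_ne _ hi, Function.update_of_ne hj]

lemma update_vshift_self (x : Pt d n) (ℓ : Fin d) (u : Fin (n+1)) :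
    Function.update (vshift x ℓ) ℓ u = Function.update x ℓ u := by
  funext j
  rcases eq_or_ne j ℓ with rfl | hj
  · rw [Function.update_self, Function.update_self]
  · rw [Function.update_of_ne hj, Function.update_of_ne hj, vshift_ne _ hj]

lemma vshift_update (x : Pt d n) (ℓ : Fin d) (u : Fin (n+1)) :
    vshift (Function.update x ℓ u) ℓ = Function.update x ℓ (u + 1) := by
  funext j
  rcases eq_or_ne j ℓ with rfl | hj
  · rw [vshift_self, Function.update_self, Function.update_self]
  · rw [vshift_ne _ hj, Function.update_of_ne hj, Function.update_of_ne hj]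

lemma val_add_one {a : Fin (n+1)} (h : (a : ℕ) < n) : ((a + 1 : Fin (n+1)) : ℕ) = (a : ℕ) + 1 :=
  Fin.val_add_one_of_lt (by rw [Fin.lt_def, Fin.val_last]; exact h)

lemma cast_succ_eq {t : ℕ} (h : t < n) :
    ((t : Fin (n+1)) + 1) = ((t + 1 : ℕ) : Fin (n+1)) := by
  apply Fin.ext
  rw [val_add_one (by rw [Fin.val_cast_of_lt (by omega)]; exact h),
    Fin.val_cast_of_lt (by omega : t < n + 1), Fin.val_cast_of_lt (by omega : t + 1 < n + 1)]

/-! ### sign lemmas -/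

lemma sgn_erase_self (S : Finset (Fin d)) (i : Fin d) : sgn (S.erase i) i = sgn S i := by
  unfold sgn
  rw [Finset.filter_erase, Finset.erase_eq_of_notMem (by simp)]

lemma sgn_insert_self (S : Finset (Fin d)) (ℓ : Fin d) : sgn (insert ℓ S) ℓ = sgn S ℓ := by
  unfold sgn
  rw [Finset.filter_insert, if_neg (by simp)]

lemma sgn_mul_self (S : Finset (Fin d)) (i : Fin d) : sgn S i * sgn S i = 1 := by
  unfold sgn
  rw [← pow_add]
  exact Even.neg_one_pow ⟨_, rfl⟩

lemma sgn_insert_of_lt {ℓ i : Fin d} (S : Finset (Fin d)) (hℓ : ℓ ∉ S) (h : ℓ < i) :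
    sgn (insert ℓ S) i = -sgn S i := by
  unfold sgn
  rw [Finset.filter_insert, if_pos h, Finset.card_insert_of_notMem (by simp [hℓ]), pow_succ]
  ring

lemma sgn_insert_of_not_lt {ℓ i : Fin d} (S : Finset (Fin d)) (h : ¬ ℓ < i) :
    sgn (insert ℓ S) i = sgn S i := by
  unfold sgn
  rw [Finset.filter_insert, if_neg h]

lemma sgn_erase_of_lt {i ℓ : Fin d} (S : Finset (Fin d)) (hi : i ∈ S) (h : i < ℓ) :
    sgn (S.erase i) ℓ = -sgn S ℓ := by
  unfold sgn
  rw [Finset.filter_erase]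
  have hmem : i ∈ S.filter (fun j => j < ℓ) := Finset.mem_filter.2 ⟨hi, h⟩
  rw [← Finset.card_erase_add_one hmem, pow_succ]
  ring

lemma sgn_erase_of_not_lt {i ℓ : Fin d} (S : Finset (Fin d)) (h : ¬ i < ℓ) :
    sgn (S.erase i) ℓ = sgn S ℓ := by
  unfold sgn
  rw [Finset.filter_erase, Finset.erase_eq_of_notMem (by simp [h])]

lemma sgn_key {i ℓ : Fin d} (S : Finset (Fin d)) (hi : i ∈ S) (hℓ : ℓ ∉ S) (hne : i ≠ ℓ) :
    sgn S i * sgn (S.erase i) ℓ = -(sgn (insert ℓ S) ℓ * sgn (insert ℓ S) i) := by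
  rw [sgn_insert_self]
  rcases hne.lt_or_gt with h | h
  · rw [sgn_erase_of_lt S hi h, sgn_insert_of_not_lt S (by exact fun hc => absurd (hc.trans h) (lt_irrefl _))]
    ring
  · rw [sgn_erase_of_not_lt S (by exact fun hc => absurd (hc.trans h) (lt_irrefl _)), sgn_insert_of_lt S hℓ h]
    ring

/-! ### the cone operator -/

def Gop (ℓ : Fin d) (c : Fin (n+1)) (A : Coch d n) : Coch d n := fun S x =>
  if ℓ ∈ S then 0 else
    sgn S ℓ * ssum (fun t => A (insert ℓ S) (Function.update x ℓ (t : Fin (n+1))))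
      ((x ℓ : ℕ)) ((c : ℕ))

def rho (ℓ : Fin d) (c : Fin (n+1)) (B : Coch d n) : Coch d n := fun S x =>
  if ℓ ∈ S then 0 else B S (Function.update x ℓ c)

lemma dP_Gop_mem (ℓ : Fin d) (c : Fin (n+1)) (A : Coch d n) (S : Finset (Fin d)) (x : Pt d n)
    (hx : (x ℓ : ℕ) < n) (hm : ℓ ∈ S) :
    dP (Gop ℓ c A) S x = A S x := by
  unfold dP
  rw [Finset.sum_eq_single_of_mem ℓ hm (fun i hi hne => by
    rw [Gop, Gop, if_pos (Finset.mem_erase.2 ⟨hne.symm, hm⟩),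
      if_pos (Finset.mem_erase.2 ⟨hne.symm, hm⟩)]
    ring)]
  rw [Gop, Gop, if_neg (Finset.notMem_erase ℓ S), if_neg (Finset.notMem_erase ℓ S)]
  have hins : insert ℓ (S.erase ℓ) = S := Finset.insert_erase hm
  have hupd : ∀ u : Fin (n+1), Function.update (vshift x ℓ) ℓ u = Function.update x ℓ u :=
    update_vshift_self x ℓ
  have hv : ((vshift x ℓ ℓ : Fin (n+1)) : ℕ) = (x ℓ : ℕ) + 1 := by
    rw [vshift_self]; exact val_add_one hx
  simp only [hins, hupd, hv, ssum_succ]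
  have : Function.update x ℓ (((x ℓ : ℕ) : Fin (n+1))) = x := by
    rw [Fin.cast_val_eq_self, Function.update_eq_self]
  rw [this]
  ring_nf
  rw [sgn_erase_self S ℓ, sgn_mul_self S ℓ, one_mul]

lemma dP_rho_mem (ℓ : Fin d) (c : Fin (n+1)) (B : Coch d n) (S : Finset (Fin d)) (x : Pt d n)
    (hm : ℓ ∈ S) : dP (rho ℓ c B) S x = 0 := by
  unfold dP
  refine Finset.sum_eq_zero fun i hi => ?_
  rcases eq_or_ne i ℓ with rfl | hne
  · rw [rho, rho, if_neg (Finset.notMem_erase i S), if_neg (Finset.notMem_erase i S)]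
    simp only [update_vshift_self]
    ring
  · rw [rho, rho, if_pos (Finset.mem_erase.2 ⟨Ne.symm hne, hm⟩),
      if_pos (Finset.mem_erase.2 ⟨Ne.symm hne, hm⟩)]
    ring

lemma dP_rho_not_mem (ℓ : Fin d) (c : Fin (n+1)) (B : Coch d n) (S : Finset (Fin d)) (x : Pt d n)
    (hm : ℓ ∉ S) : dP (rho ℓ c B) S x = dP B S (Function.update x ℓ c) := by
  unfold dP
  refine Finset.sum_congr rfl fun i hi => ?_
  have hne : i ≠ ℓ := fun h => hm (h ▸ hi)
  have hne' : ℓ ∉ S.erase i := fun h => hm (Finset.mem_of_mem_erase h)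
  rw [rho, rho, if_neg hne', if_neg hne', update_vshift x hne c]

lemma ssum_sub' (f g : ℕ → ℤ) (a b : ℕ) :
    ssum f a b - ssum g a b = ssum (fun t => f t - g t) a b := by
  simp [ssum, Finset.sum_sub_distrib]
  ring

lemma ssum_smul (z : ℤ) (f : ℕ → ℤ) (a b : ℕ) :
    z * ssum f a b = ssum (fun t => z * f t) a b := by
  simp [ssum, mul_sub, Finset.mul_sum]

lemma dP_Gop_not_mem (ℓ : Fin d) (c : Fin (n+1)) (A : Coch d n) (S : Finset (Fin d)) (x : Pt d n)
    (hm : ℓ ∉ S)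
    (hc : ∀ t : ℕ, t < n → dP A (insert ℓ S) (Function.update x ℓ ((t : ℕ) : Fin (n+1))) = 0) :
    dP (Gop ℓ c A) S x = A S x - A S (Function.update x ℓ c) := by
  have ha : (x ℓ : ℕ) ≤ n := Nat.lt_succ_iff.1 (x ℓ).isLt
  have hb : (c : ℕ) ≤ n := Nat.lt_succ_iff.1 c.isLt
  have step1 : dP (Gop ℓ c A) S x =
      ssum (fun t => ∑ i ∈ S, sgn S i * sgn (S.erase i) ℓ *
        (A ((insert ℓ S).erase i) (vshift (Function.update x ℓ ((t : ℕ) : Fin (n+1))) i) -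
         A ((insert ℓ S).erase i) (Function.update x ℓ ((t : ℕ) : Fin (n+1)))))
        ((x ℓ : ℕ)) ((c : ℕ)) := by
    rw [ssum_sum]
    unfold dP
    refine Finset.sum_congr rfl fun i hi => ?_
    have hne : i ≠ ℓ := fun h => hm (h ▸ hi)
    have hne' : ℓ ∉ S.erase i := fun h => hm (Finset.mem_of_mem_erase h)
    have hset : insert ℓ (S.erase i) = (insert ℓ S).erase i := by
      rw [Finset.erase_insert_of_ne (Ne.symm hne)]
    rw [Gop, Gop, if_neg hne', if_neg hne']
    simp only [hset, update_vshift x hne, vshift_ne x hne.symm]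
    rw [show ∀ Y Z : ℤ, sgn S i * (sgn (S.erase i) ℓ * Y - sgn (S.erase i) ℓ * Z) =
      (sgn S i * sgn (S.erase i) ℓ) * Y - (sgn S i * sgn (S.erase i) ℓ) * Z from
      fun Y Z => by ring]
    rw [ssum_smul, ssum_smul, ssum_sub']
    congr 1
    funext t
    ring
  rw [step1]
  have step2 : ∀ t : ℕ, t < max ((x ℓ : ℕ)) ((c : ℕ)) →
      (∑ i ∈ S, sgn S i * sgn (S.erase i) ℓ *
        (A ((insert ℓ S).erase i) (vshift (Function.update x ℓ ((t : ℕ) : Fin (n+1))) i) -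
         A ((insert ℓ S).erase i) (Function.update x ℓ ((t : ℕ) : Fin (n+1))))) =
      A S (Function.update x ℓ (((t+1 : ℕ) : Fin (n+1)))) -
      A S (Function.update x ℓ ((t : ℕ) : Fin (n+1))) := by
    intro t ht
    have htn : t < n := lt_of_lt_of_le ht (by omega)
    have h0 := hc t htn
    rw [dP, Finset.sum_insert hm, Finset.erase_insert hm] at h0
    have hsh : vshift (Function.update x ℓ ((t : ℕ) : Fin (n+1))) ℓ =
        Function.update x ℓ (((t+1 : ℕ) : Fin (n+1))) := by
      rw [vshift_update, cast_succ_eq htn]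
    rw [hsh] at h0
    have hkey : ∀ i ∈ S, sgn S i * sgn (S.erase i) ℓ *
        (A ((insert ℓ S).erase i) (vshift (Function.update x ℓ ((t : ℕ) : Fin (n+1))) i) -
         A ((insert ℓ S).erase i) (Function.update x ℓ ((t : ℕ) : Fin (n+1)))) =
        -(sgn (insert ℓ S) ℓ) * (sgn (insert ℓ S) i *
        (A ((insert ℓ S).erase i) (vshift (Function.update x ℓ ((t : ℕ) : Fin (n+1))) i) -
         A ((insert ℓ S).erase i) (Function.update x ℓ ((t : ℕ) : Fin (n+1))))) := fun i hi => by
      have hne : i ≠ ℓ := fun h => hm (h ▸ hi)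
      rw [sgn_key S hi hm hne]
      ring
    rw [Finset.sum_congr rfl hkey, ← Finset.mul_sum]
    have hS : ∑ i ∈ S, (sgn (insert ℓ S) i *
        (A ((insert ℓ S).erase i) (vshift (Function.update x ℓ ((t : ℕ) : Fin (n+1))) i) -
         A ((insert ℓ S).erase i) (Function.update x ℓ ((t : ℕ) : Fin (n+1))))) =
        -(sgn (insert ℓ S) ℓ *
          (A S (Function.update x ℓ (((t+1 : ℕ) : Fin (n+1)))) -
           A S (Function.update x ℓ ((t : ℕ) : Fin (n+1))))) := by linarith [h0]
    rw [hS, sgn_insert_self]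
    linear_combination (A S (Function.update x ℓ (((t+1 : ℕ) : Fin (n+1)))) -
      A S (Function.update x ℓ ((t : ℕ) : Fin (n+1)))) * sgn_mul_self S ℓ
  have htele := ssum_sub (fun u : ℕ => A S (Function.update x ℓ ((u : ℕ) : Fin (n+1))))
    ((x ℓ : ℕ)) ((c : ℕ))
  rw [ssum_congr _ _ step2, htele,
    Fin.cast_val_eq_self (x ℓ), Function.update_eq_self, Fin.cast_val_eq_self c]

/-! ### support lemmas -/

lemma Gop_ne_zero {ℓ : Fin d} {c : Fin (n+1)} {A : Coch d n} {S : Finset (Fin d)} {x : Pt d n}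
    (h : Gop ℓ c A S x ≠ 0) :
    ℓ ∉ S ∧ ∃ t : ℕ, A (insert ℓ S) (Function.update x ℓ ((t : ℕ) : Fin (n+1))) ≠ 0 := by
  rw [Gop] at h
  by_cases hm : ℓ ∈ S
  · exact absurd (if_pos hm) (by intro he; rw [he] at h; exact h rfl)
  · rw [if_neg hm] at h
    refine ⟨hm, ?_⟩
    by_contra hall
    push_neg at hall
    exact h (by rw [ssum_eq_zero fun t _ => hall t, mul_zero])

lemma rho_ne_zero {ℓ : Fin d} {c : Fin (n+1)} {B : Coch d n} {S : Finset (Fin d)} {x : Pt d n}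
    (h : rho ℓ c B S x ≠ 0) :
    ℓ ∉ S ∧ B S (Function.update x ℓ c) ≠ 0 := by
  rw [rho] at h
  by_cases hm : ℓ ∈ S
  · exact absurd (if_pos hm) (by intro he; rw [he] at h; exact h rfl)
  · rw [if_neg hm] at h; exact ⟨hm, h⟩

/-! ### norm lemmas -/

lemma normP_add_le (F G : Coch d n) :
    normP (fun S x => F S x + G S x) ≤ normP F + normP G := by
  unfold normP
  rw [← Finset.sum_add_distrib]
  refine Finset.sum_le_sum fun S _ => ?_
  rw [← Finset.sum_add_distrib]
  exact Finset.sum_le_sum fun x _ => Int.natAbs_add_le _ _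

lemma natAbs_sgn_mul (S : Finset (Fin d)) (i : Fin d) (z : ℤ) :
    (sgn S i * z).natAbs = z.natAbs := by
  rw [Int.natAbs_mul, sgn, Int.natAbs_pow, Int.natAbs_neg, Int.natAbs_one, one_pow, one_mul]

def eCnt (c : Fin (n+1)) (s u : Fin (n+1)) : ℕ :=
  if (u : ℕ) ∈ Finset.Ico (min (s:ℕ) (c:ℕ)) (max (s:ℕ) (c:ℕ)) then 1 else 0

lemma count_e (hn : 1 ≤ n) (c u : Fin (n+1)) : (∑ s : Fin (n+1), eCnt c s u) ≤ n := by
  classical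
  set s₀ : Fin (n+1) := if (u:ℕ) < (c:ℕ) then Fin.last n else ⟨0, by omega⟩ with hs₀
  have h0 : eCnt c s₀ u = 0 := by
    rw [eCnt, if_neg]
    rcases lt_or_ge (u:ℕ) (c:ℕ) with h | h
    · rw [hs₀, if_pos h]
      simp only [Finset.mem_Ico, Fin.val_last]
      have hcn : (c:ℕ) ≤ n := Nat.lt_succ_iff.1 c.isLt
      rw [min_comm, min_eq_left hcn]
      omega
    · rw [hs₀, if_neg (by omega)]
      simp only [Finset.mem_Ico]
      omega
  have := Finset.sum_erase_add Finset.univ (fun s => eCnt c s u) (Finset.mem_univ s₀)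
  rw [← this]
  simp only [h0, add_zero]
  calc ∑ s ∈ Finset.univ.erase s₀, eCnt c s u ≤ ∑ _s ∈ Finset.univ.erase s₀, 1 :=
        Finset.sum_le_sum fun s _ => by rw [eCnt]; split <;> omega
    _ = (Finset.univ.erase s₀).card := by rw [Finset.sum_const, smul_eq_mul, mul_one]
    _ = n := by
        rw [Finset.card_erase_of_mem (Finset.mem_univ _), Finset.card_univ, Fintype.card_fin]
        omega

lemma norm_Gop (hn : 1 ≤ n) (ℓ : Fin d) (c : Fin (n+1)) (A : Coch d n) :
    normP (Gop ℓ c A) ≤ n * normP A := by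
  classical
  have hpt : ∀ S (x : Pt d n), (Gop ℓ c A S x).natAbs ≤
      if ℓ ∈ S then 0 else
      ∑ u : Fin (n+1), eCnt c (x ℓ) u * (A (insert ℓ S) (Function.update x ℓ u)).natAbs := by
    intro S x
    by_cases hm : ℓ ∈ S
    · simp [Gop, hm]
    · rw [Gop, if_neg hm, if_neg hm, natAbs_sgn_mul]
      refine le_trans (ssum_natAbs_le _ _ _) (le_of_eq ?_)
      have hrhs : ∀ u : Fin (n+1), eCnt c (x ℓ) u *
          (A (insert ℓ S) (Function.update x ℓ u)).natAbs =
          if (u : ℕ) ∈ Finset.Ico (min ((x ℓ:ℕ)) ((c:ℕ))) (max ((x ℓ:ℕ)) ((c:ℕ))) then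
            (A (insert ℓ S) (Function.update x ℓ u)).natAbs else 0 := fun u => by
        rw [eCnt]; split <;> simp
      rw [Finset.sum_congr rfl fun u _ => hrhs u, ← Finset.sum_filter]
      have hMn : max ((x ℓ:ℕ)) ((c:ℕ)) ≤ n := by
        have h1 : (x ℓ : ℕ) ≤ n := Nat.lt_succ_iff.1 (x ℓ).isLt
        have h2 : (c : ℕ) ≤ n := Nat.lt_succ_iff.1 c.isLt
        omega
      refine Finset.sum_nbij' (i := fun t => ((t : ℕ) : Fin (n+1)))
        (j := fun u => ((u : Fin (n+1)) : ℕ)) ?_ ?_ ?_ ?_ ?_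
      · intro t ht
        have htM := (Finset.mem_Ico.1 ht).2
        simp only [Finset.mem_filter, Finset.mem_univ, true_and]
        rw [Fin.val_cast_of_lt (by omega)]
        exact ht
      · intro u hu
        exact (Finset.mem_filter.1 hu).2
      · intro t ht
        have htM := (Finset.mem_Ico.1 ht).2
        rw [Fin.val_cast_of_lt (by omega)]
      · intro u hu
        rw [Fin.cast_val_eq_self]
      · intro t ht
        rfl
  calc normP (Gop ℓ c A) ≤ ∑ S : Finset (Fin d), if ℓ ∈ S then 0 else
        ∑ x : Pt d n, ∑ u : Fin (n+1),
          eCnt c (x ℓ) u * (A (insert ℓ S) (Function.update x ℓ u)).natAbs := by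
        rw [normP]
        refine Finset.sum_le_sum fun S _ => ?_
        by_cases hm : ℓ ∈ S
        · rw [if_pos hm]
          refine le_trans (Finset.sum_le_sum fun x _ => hpt S x) ?_
          simp [hm]
        · rw [if_neg hm]
          refine le_trans (Finset.sum_le_sum fun x _ => hpt S x) ?_
          simp only [if_neg hm]
          exact le_refl _
    _ ≤ ∑ S : Finset (Fin d), if ℓ ∈ S then 0 else
          n * ∑ y : Pt d n, (A (insert ℓ S) y).natAbs := by
        refine Finset.sum_le_sum fun S _ => ?_
        by_cases hm : ℓ ∈ S
        · rw [if_pos hm, if_pos hm]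
        · rw [if_neg hm, if_neg hm]
          -- involution argument
          have hswap : (∑ x : Pt d n, ∑ u : Fin (n+1),
              eCnt c (x ℓ) u * (A (insert ℓ S) (Function.update x ℓ u)).natAbs) =
              ∑ y : Pt d n, ∑ s : Fin (n+1),
                eCnt c s (y ℓ) * (A (insert ℓ S) y).natAbs := by
            have e1 : (∑ p : Pt d n × Fin (n+1), eCnt c (p.1 ℓ) p.2 *
                (A (insert ℓ S) (Function.update p.1 ℓ p.2)).natAbs) =
                ∑ x : Pt d n, ∑ u : Fin (n+1),
                  eCnt c (x ℓ) u * (A (insert ℓ S) (Function.update x ℓ u)).natAbs :=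
              Fintype.sum_prod_type _
            have e2 : (∑ p : Pt d n × Fin (n+1), eCnt c p.2 (p.1 ℓ) *
                (A (insert ℓ S) p.1).natAbs) =
                ∑ y : Pt d n, ∑ s : Fin (n+1), eCnt c s (y ℓ) * (A (insert ℓ S) y).natAbs :=
              Fintype.sum_prod_type _
            rw [← e1, ← e2]
            have hinv : Function.Involutive
                (fun p : Pt d n × Fin (n+1) => (Function.update p.1 ℓ p.2, p.1 ℓ)) := by
              intro p
              refine Prod.ext ?_ ?_
              · simp [Function.update_idem, Function.update_eq_self]
              · simp
            have := (hinv.bijective).sum_comp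
              (fun p : Pt d n × Fin (n+1) =>
                eCnt c (p.1 ℓ) p.2 * (A (insert ℓ S) (Function.update p.1 ℓ p.2)).natAbs)
            rw [← this]
            refine Finset.sum_congr rfl fun p _ => ?_
            simp [Function.update_idem, Function.update_eq_self]
          rw [hswap]
          calc (∑ y : Pt d n, ∑ s : Fin (n+1), eCnt c s (y ℓ) * (A (insert ℓ S) y).natAbs)
              = ∑ y : Pt d n, (∑ s : Fin (n+1), eCnt c s (y ℓ)) * (A (insert ℓ S) y).natAbs := by
                refine Finset.sum_congr rfl fun y _ => ?_
                rw [Finset.sum_mul]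
            _ ≤ ∑ y : Pt d n, n * (A (insert ℓ S) y).natAbs :=
                Finset.sum_le_sum fun y _ =>
                  Nat.mul_le_mul_right _ (count_e hn c (y ℓ))
            _ = n * ∑ y : Pt d n, (A (insert ℓ S) y).natAbs := by rw [Finset.mul_sum]
    _ ≤ n * normP A := by
        have h1 : (∑ S : Finset (Fin d), if ℓ ∈ S then 0 else
            n * ∑ y : Pt d n, (A (insert ℓ S) y).natAbs) =
            ∑ S ∈ Finset.univ.filter (fun S : Finset (Fin d) => ℓ ∉ S),
              n * ∑ y : Pt d n, (A (insert ℓ S) y).natAbs := by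
          rw [Finset.sum_filter]
          refine Finset.sum_congr rfl fun S _ => ?_
          by_cases hm : ℓ ∈ S <;> simp [hm]
        rw [h1]
        have h2 : (∑ S ∈ Finset.univ.filter (fun S : Finset (Fin d) => ℓ ∉ S),
            n * ∑ y : Pt d n, (A (insert ℓ S) y).natAbs) =
            ∑ T ∈ (Finset.univ.filter (fun S : Finset (Fin d) => ℓ ∉ S)).image
              (fun S => insert ℓ S), n * ∑ y : Pt d n, (A T y).natAbs := by
          rw [Finset.sum_image]
          intro a ha b hb hab
          have ha' := (Finset.mem_filter.1 ha).2
          have hb' := (Finset.mem_filter.1 hb).2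
          rw [← Finset.erase_insert ha', ← Finset.erase_insert hb', show insert ℓ a = insert ℓ b from hab]
        rw [h2, normP, Finset.mul_sum]
        exact Finset.sum_le_sum_of_subset (Finset.subset_univ _)

lemma norm_rho (ℓ : Fin d) (c : Fin (n+1)) (B : Coch d n) :
    normP (rho ℓ c B) ≤ (n+1) * normP B := by
  classical
  rw [normP, normP, Finset.mul_sum]
  refine Finset.sum_le_sum fun S _ => ?_
  have h1 : ∀ x : Pt d n, (rho ℓ c B S x).natAbs ≤ (B S (Function.update x ℓ c)).natAbs := by
    intro x
    rw [rho]
    split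
    · simp
    · exact le_refl _
  refine le_trans (Finset.sum_le_sum fun x _ => h1 x) ?_
  have h2 : ∀ x : Pt d n, (B S (Function.update x ℓ c)).natAbs ≤
      ∑ u : Fin (n+1), (B S (Function.update x ℓ u)).natAbs := fun x =>
    Finset.single_le_sum (f := fun u => (B S (Function.update x ℓ u)).natAbs)
      (fun _ _ => Nat.zero_le _) (Finset.mem_univ c)
  refine le_trans (Finset.sum_le_sum fun x _ => h2 x) ?_
  have e1 : (∑ p : Pt d n × Fin (n+1), (B S (Function.update p.1 ℓ p.2)).natAbs) =
      ∑ x : Pt d n, ∑ u : Fin (n+1), (B S (Function.update x ℓ u)).natAbs :=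
    Fintype.sum_prod_type _
  rw [← e1]
  have hinv : Function.Involutive
      (fun p : Pt d n × Fin (n+1) => (Function.update p.1 ℓ p.2, p.1 ℓ)) := by
    intro p
    refine Prod.ext ?_ ?_
    · simp [Function.update_idem, Function.update_eq_self]
    · simp
  have hcomp := (hinv.bijective).sum_comp
    (fun p : Pt d n × Fin (n+1) => (B S (Function.update p.1 ℓ p.2)).natAbs)
  rw [← hcomp]
  have e2 : ∀ p : Pt d n × Fin (n+1),
      (B S (Function.update (Function.update p.1 ℓ p.2) ℓ (p.1 ℓ))).natAbs =
      (B S p.1).natAbs := fun p => by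
    rw [Function.update_idem, Function.update_eq_self]
  calc (∑ p : Pt d n × Fin (n+1),
        (B S (Function.update (Function.update p.1 ℓ p.2) ℓ (p.1 ℓ))).natAbs)
      = ∑ p : Pt d n × Fin (n+1), (B S p.1).natAbs :=
        Finset.sum_congr rfl fun p _ => e2 p
    _ = ∑ y : Pt d n, ∑ _u : Fin (n+1), (B S y).natAbs := Fintype.sum_prod_type _
    _ = (n+1) * ∑ y : Pt d n, (B S y).natAbs := by
        simp [Finset.sum_const, Finset.mul_sum, mul_comm]
    _ ≤ (n+1) * ∑ y : Pt d n, (B S y).natAbs := le_refl _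

lemma dP_add (F G : Coch d n) (S : Finset (Fin d)) (x : Pt d n) :
    dP (fun S' x' => F S' x' + G S' x') S x = dP F S x + dP G S x := by
  unfold dP
  rw [← Finset.sum_add_distrib]
  exact Finset.sum_congr rfl fun i _ => by ring

lemma card_le_of_val_lt {S : Finset (Fin d)} {k : ℕ} (h : ∀ i ∈ S, (i : ℕ) < k) :
    S.card ≤ k := by
  classical
  have h1 : S.card = (S.image Fin.val).card :=
    (Finset.card_image_of_injective S Fin.val_injective).symm
  rw [h1]
  have hsub : S.image Fin.val ⊆ Finset.range k := by
    intro v hv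
    simp only [Finset.mem_image] at hv
    obtain ⟨i, hi, rfl⟩ := hv
    exact Finset.mem_range.2 (h i hi)
  simpa using Finset.card_le_card hsub

lemma master (k : ℕ) (hn : 1 ≤ n) :
    ∀ m : ℕ, k + 1 ≤ m → ∀ z : Pt d n, ∀ A : Coch d n,
    (∀ (S : Finset (Fin d)) (x : Pt d n), A S x ≠ 0 →
      (S.card = k+1 ∧ ∀ i ∈ S, (x i : ℕ) < n) ∧ (∀ i ∈ S, (i:ℕ) < m) ∧
      (∀ i : Fin d, m ≤ (i:ℕ) → x i = z i)) →
    (∀ (S : Finset (Fin d)) (x : Pt d n), (S.card = k+2 ∧ ∀ i ∈ S, (x i : ℕ) < n) →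
      (∀ i ∈ S, (i:ℕ) < m) →
      (∀ i : Fin d, m ≤ (i:ℕ) → x i = z i) → dP A S x = 0) →
    ∃ B : Coch d n,
      (∀ (S : Finset (Fin d)) (x : Pt d n), B S x ≠ 0 →
        (S.card = k ∧ ∀ i ∈ S, (x i : ℕ) < n) ∧ (∀ i ∈ S, (i:ℕ) < m) ∧
        (∀ i : Fin d, m ≤ (i:ℕ) → x i = z i)) ∧
      (∀ (S : Finset (Fin d)) (x : Pt d n), (S.card = k+1 ∧ ∀ i ∈ S, (x i : ℕ) < n) →
        (∀ i ∈ S, (i:ℕ) < m) →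
        (∀ i : Fin d, m ≤ (i:ℕ) → x i = z i) → dP B S x = A S x) ∧
      normP B ≤ (m - k) * n * normP A := by
  refine Nat.le_induction ?_ ?_
  · -- base case m = k + 1
    intro z A hsupp hcocy
    by_cases hkd : k < d
    · obtain ⟨ℓ, hℓval⟩ : ∃ ℓ : Fin d, (ℓ : ℕ) = k := ⟨⟨k, hkd⟩, rfl⟩
      have hnℓ : ∀ S x, A S x ≠ 0 → ℓ ∈ S := by
        intro S x hA
        obtain ⟨⟨hcard, _⟩, hins, _⟩ := hsupp S x hA
        by_contra hℓS
        have hlt : ∀ i : Fin d, i ∈ S → (i : ℕ) < k := by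
          intro i hi
          have h1 := hins i hi
          have h2 : i ≠ ℓ := fun h => hℓS (h ▸ hi)
          have h3 : (i : ℕ) ≠ k := fun h => h2 (Fin.ext (by rw [h, hℓval]))
          omega
        have := card_le_of_val_lt hlt
        omega
      refine ⟨Gop ℓ 0 A, ?_, ?_, ?_⟩
      · intro S x hB
        obtain ⟨hℓS, t, ht⟩ := Gop_ne_zero hB
        obtain ⟨⟨hcard, hval⟩, hins, hinx⟩ := hsupp _ _ ht
        refine ⟨⟨?_, ?_⟩, ?_, ?_⟩
        · have := Finset.card_insert_of_notMem hℓS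
          omega
        · intro i hi
          have hne : i ≠ ℓ := fun h => hℓS (h ▸ hi)
          have := hval i (Finset.mem_insert_of_mem hi)
          rwa [Function.update_of_ne hne] at this
        · exact fun i hi => hins i (Finset.mem_insert_of_mem hi)
        · intro i hile
          have hne : i ≠ ℓ := by
            intro h
            rw [h, hℓval] at hile
            omega
          have := hinx i hile
          rwa [Function.update_of_ne hne] at this
      · intro S x ⟨hcard, hval⟩ hins hinx
        by_cases hℓS : ℓ ∈ S
        · exact dP_Gop_mem ℓ 0 A S x (hval ℓ hℓS) hℓS
        · rw [dP_Gop_not_mem ℓ 0 A S x hℓS ?hc]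
          case hc =>
            intro t htn
            refine hcocy (insert ℓ S) (Function.update x ℓ ((t : ℕ) : Fin (n+1)))
              ⟨?_, ?_⟩ ?_ ?_
            · rw [Finset.card_insert_of_notMem hℓS, hcard]
            · intro i hi
              rcases Finset.mem_insert.1 hi with rfl | hiS
              · rw [Function.update_self, Fin.val_cast_of_lt (by omega)]
                exact htn
              · have hne : i ≠ ℓ := fun h => hℓS (h ▸ hiS)
                rw [Function.update_of_ne hne]
                exact hval i hiS
            · intro i hi
              rcases Finset.mem_insert.1 hi with rfl | hiS
              · omega
              · exact hins i hiS
            · intro i hile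
              have hne : i ≠ ℓ := by
                intro h
                rw [h, hℓval] at hile
                omega
              rw [Function.update_of_ne hne]
              exact hinx i hile
          have h1 : A S x = 0 := by
            by_contra hA
            exact hℓS (hnℓ S x hA)
          have h2 : A S (Function.update x ℓ (0 : Fin (n+1))) = 0 := by
            by_contra hA
            exact hℓS (hnℓ _ _ hA)
          rw [h1, h2, sub_zero]
      · have h1 := norm_Gop hn ℓ 0 A
        have h2 : k + 1 - k = 1 := by omega
        rw [h2, one_mul]
        exact h1
    · -- k ≥ d : A is identically zero
      push_neg at hkd
      have hA0 : ∀ S x, A S x = 0 := by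
        intro S x
        by_contra hA
        obtain ⟨⟨hcard, _⟩, _, _⟩ := hsupp S x hA
        have h1 : S.card ≤ d := by
          have := Finset.card_le_card (Finset.subset_univ S)
          simpa using this
        omega
      refine ⟨fun _ _ => 0, by simp, ?_, by simp [normP]⟩
      intro S x _ _ _
      rw [hA0 S x, dP, Finset.sum_eq_zero fun i _ => by ring]
  · -- inductive step
    intro m hm IH z A hsupp hcocy
    by_cases hmd : m < d
    · obtain ⟨ℓ, hℓval⟩ : ∃ ℓ : Fin d, (ℓ : ℕ) = m := ⟨⟨m, hmd⟩, rfl⟩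
      classical
      set A' : Fin (n+1) → Coch d n :=
        fun c S x => if ℓ ∉ S ∧ x ℓ = c then A S x else 0 with hA'
      have hsum : ∑ c : Fin (n+1), normP (A' c) ≤ normP A := by
        unfold normP
        rw [Finset.sum_comm]
        refine Finset.sum_le_sum fun S _ => ?_
        rw [Finset.sum_comm]
        refine Finset.sum_le_sum fun x _ => ?_
        by_cases hℓS : ℓ ∈ S
        · have : ∀ c : Fin (n+1), (A' c S x).natAbs = 0 := fun c => by
            rw [hA']
            simp [hℓS]
          simp [this]
        · have heq : ∀ c : Fin (n+1), (A' c S x).natAbs =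
              if x ℓ = c then (A S x).natAbs else 0 := fun c => by
            rw [hA']
            by_cases hxc : x ℓ = c <;> simp [hℓS, hxc]
          rw [Finset.sum_congr rfl fun c _ => heq c, Finset.sum_ite_eq]
          simp
      have hpig : ∃ c : Fin (n+1), (n+1) * normP (A' c) ≤ normP A := by
        obtain ⟨c, _, hcmin⟩ := Finset.exists_min_image Finset.univ
          (fun c => normP (A' c)) ⟨0, Finset.mem_univ 0⟩
        refine ⟨c, le_trans ?_ hsum⟩
        calc (n+1) * normP (A' c) = ∑ _c' : Fin (n+1), normP (A' c) := by
              rw [Finset.sum_const, Finset.card_univ, Fintype.card_fin, smul_eq_mul]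
          _ ≤ ∑ c' : Fin (n+1), normP (A' c') :=
              Finset.sum_le_sum fun c' _ => hcmin c' (Finset.mem_univ c')
      obtain ⟨c, hc⟩ := hpig
      have hxℓ_ne : ∀ i : Fin d, i ∈ (∅ : Finset (Fin d)) → False := by simp
      -- apply the induction hypothesis to the slice A' c
      have hIH := IH (Function.update z ℓ c) (A' c) ?suppA' ?cocyA'
      case suppA' =>
        intro S x hne
        have hcond : (ℓ ∉ S ∧ x ℓ = c) ∧ A S x ≠ 0 := by
          by_cases h : ℓ ∉ S ∧ x ℓ = c
          · refine ⟨h, ?_⟩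
            rw [hA'] at hne
            simpa [h] using hne
          · exfalso
            rw [hA'] at hne
            simp only [if_neg h] at hne
            exact hne rfl
        obtain ⟨⟨hℓS, hxc⟩, hAne⟩ := hcond
        obtain ⟨hVF, hins, hinx⟩ := hsupp S x hAne
        refine ⟨hVF, ?_, ?_⟩
        · intro i hi
          have h1 := hins i hi
          have h2 : i ≠ ℓ := fun h => hℓS (h ▸ hi)
          have h3 : (i : ℕ) ≠ m := fun h => h2 (Fin.ext (by rw [h, hℓval]))
          omega
        · intro i him
          by_cases hiℓ : i = ℓ
          · rw [hiℓ, Function.update_self, ← hxc]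
          · rw [Function.update_of_ne hiℓ]
            refine hinx i ?_
            have h3 : (i : ℕ) ≠ m := fun h => hiℓ (Fin.ext (by rw [h, hℓval]))
            omega
      case cocyA' =>
        intro S x hVF hins hinx
        have hℓS : ℓ ∉ S := fun h => by have := hins ℓ h; omega
        have hxℓ : x ℓ = c := by
          have := hinx ℓ (by omega)
          rwa [Function.update_self] at this
        have hAA : dP (A' c) S x = dP A S x := by
          unfold dP
          refine Finset.sum_congr rfl fun i hi => ?_
          have hiℓ : i ≠ ℓ := fun h => hℓS (h ▸ hi)
          have hℓe : ℓ ∉ S.erase i := fun h => hℓS (Finset.mem_of_mem_erase h)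
          have hv : vshift x i ℓ = c := by rw [vshift_ne x (Ne.symm hiℓ)]; exact hxℓ
          have e1 : A' c (S.erase i) (vshift x i) = A (S.erase i) (vshift x i) := by
            simp only [hA']
            rw [if_pos ⟨hℓe, hv⟩]
          have e2 : A' c (S.erase i) x = A (S.erase i) x := by
            simp only [hA']
            rw [if_pos ⟨hℓe, hxℓ⟩]
          rw [e1, e2]
        rw [hAA]
        refine hcocy S x hVF (fun i hi => by have := hins i hi; omega) ?_
        intro i him
        have hiℓ : i ≠ ℓ := fun h => by rw [h, hℓval] at him; omega
        have := hinx i (by omega)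
        rwa [Function.update_of_ne hiℓ] at this
      obtain ⟨B', hB'supp, hB'eq, hB'norm⟩ := hIH
      refine ⟨fun S x => Gop ℓ c A S x + rho ℓ c B' S x, ?_, ?_, ?_⟩
      · -- support
        intro S x hne
        simp only [] at hne
        have hor : Gop ℓ c A S x ≠ 0 ∨ rho ℓ c B' S x ≠ 0 := by
          by_contra h
          push_neg at h
          rw [h.1, h.2] at hne
          exact hne rfl
        rcases hor with h | h
        · obtain ⟨hℓS, t, ht⟩ := Gop_ne_zero h
          obtain ⟨⟨hcard, hval⟩, hins, hinx⟩ := hsupp _ _ ht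
          refine ⟨⟨?_, ?_⟩, ?_, ?_⟩
          · have := Finset.card_insert_of_notMem hℓS
            omega
          · intro i hi
            have hiℓ : i ≠ ℓ := fun hh => hℓS (hh ▸ hi)
            have := hval i (Finset.mem_insert_of_mem hi)
            rwa [Function.update_of_ne hiℓ] at this
          · exact fun i hi => hins i (Finset.mem_insert_of_mem hi)
          · intro i him
            have hiℓ : i ≠ ℓ := fun hh => by rw [hh, hℓval] at him; omega
            have := hinx i him
            rwa [Function.update_of_ne hiℓ] at this
        · obtain ⟨hℓS, hB⟩ := rho_ne_zero h
          obtain ⟨⟨hcard, hval⟩, hins, hinx⟩ := hB'supp _ _ hB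
          refine ⟨⟨hcard, ?_⟩, ?_, ?_⟩
          · intro i hi
            have hiℓ : i ≠ ℓ := fun hh => hℓS (hh ▸ hi)
            have := hval i hi
            rwa [Function.update_of_ne hiℓ] at this
          · exact fun i hi => by have := hins i hi; omega
          · intro i him
            have hiℓ : i ≠ ℓ := fun hh => by rw [hh, hℓval] at him; omega
            have h2 := hinx i (by omega)
            rw [Function.update_of_ne hiℓ, Function.update_of_ne hiℓ] at h2
            exact h2
      · -- coboundary equation
        intro S x hVF hins hinx
        rw [dP_add]
        by_cases hℓS : ℓ ∈ S
        · rw [dP_Gop_mem ℓ c A S x (hVF.2 ℓ hℓS) hℓS, dP_rho_mem ℓ c B' S x hℓS, add_zero]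
        · rw [dP_Gop_not_mem ℓ c A S x hℓS ?hcz, dP_rho_not_mem ℓ c B' S x hℓS]
          case hcz =>
            intro t htn
            refine hcocy (insert ℓ S) (Function.update x ℓ ((t : ℕ) : Fin (n+1)))
              ⟨?_, ?_⟩ ?_ ?_
            · rw [Finset.card_insert_of_notMem hℓS, hVF.1]
            · intro i hi
              rcases Finset.mem_insert.1 hi with rfl | hiS
              · rw [Function.update_self, Fin.val_cast_of_lt (by omega)]
                exact htn
              · have hiℓ : i ≠ ℓ := fun hh => hℓS (hh ▸ hiS)
                rw [Function.update_of_ne hiℓ]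
                exact hVF.2 i hiS
            · intro i hi
              rcases Finset.mem_insert.1 hi with rfl | hiS
              · omega
              · have := hins i hiS
                omega
            · intro i him
              have hiℓ : i ≠ ℓ := fun hh => by rw [hh, hℓval] at him; omega
              rw [Function.update_of_ne hiℓ]
              exact hinx i him
          have heq2 : dP B' S (Function.update x ℓ c) = A' c S (Function.update x ℓ c) := by
            refine hB'eq S (Function.update x ℓ c) ⟨hVF.1, ?_⟩ ?_ ?_
            · intro i hi
              have hiℓ : i ≠ ℓ := fun hh => hℓS (hh ▸ hi)
              rw [Function.update_of_ne hiℓ]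
              exact hVF.2 i hi
            · intro i hi
              have h1 := hins i hi
              have hiℓ : i ≠ ℓ := fun hh => hℓS (hh ▸ hi)
              have h3 : (i : ℕ) ≠ m := fun hh => hiℓ (Fin.ext (by rw [hh, hℓval]))
              omega
            · intro i him
              by_cases hiℓ : i = ℓ
              · rw [hiℓ, Function.update_self, Function.update_self]
              · rw [Function.update_of_ne hiℓ, Function.update_of_ne hiℓ]
                refine hinx i ?_
                have h3 : (i : ℕ) ≠ m := fun hh => hiℓ (Fin.ext (by rw [hh, hℓval]))
                omega
          have heq3 : A' c S (Function.update x ℓ c) = A S (Function.update x ℓ c) := by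
            simp only [hA']
            rw [if_pos ⟨hℓS, Function.update_self ℓ c x⟩]
          rw [heq2, heq3]
          ring
      · -- norm bound
        calc normP (fun S x => Gop ℓ c A S x + rho ℓ c B' S x)
            ≤ normP (Gop ℓ c A) + normP (rho ℓ c B') := normP_add_le _ _
          _ ≤ n * normP A + (n+1) * normP B' :=
              Nat.add_le_add (norm_Gop hn ℓ c A) (norm_rho ℓ c B')
          _ ≤ n * normP A + (n+1) * ((m - k) * n * normP (A' c)) :=
              Nat.add_le_add_left (Nat.mul_le_mul_left _ hB'norm) _
          _ = n * normP A + (m - k) * n * ((n+1) * normP (A' c)) := by ring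
          _ ≤ n * normP A + (m - k) * n * normP A :=
              Nat.add_le_add_left (Nat.mul_le_mul_left _ hc) _
          _ = (m + 1 - k) * n * normP A := by
              have hmk : m + 1 - k = (m - k) + 1 := by omega
              rw [hmk]
              ring
    · -- m ≥ d : the slice conditions are vacuous
      have hd : d ≤ m := by omega
      have hIH := IH z A ?supp2 ?cocy2
      case supp2 =>
        intro S x hA
        exact ⟨(hsupp S x hA).1, fun i _ => lt_of_lt_of_le i.isLt hd,
          fun i him => absurd him (by have := i.isLt; omega)⟩
      case cocy2 =>
        intro S x hVF hins hinx
        exact hcocy S x hVF (fun i hi => by have := hins i hi; omega)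
          (fun i him => absurd him (by have := i.isLt; omega))
      obtain ⟨B, hBsupp, hBeq, hBnorm⟩ := hIH
      refine ⟨B, ?_, ?_, ?_⟩
      · intro S x hB
        obtain ⟨hVF, hins, hinx⟩ := hBsupp S x hB
        exact ⟨hVF, fun i hi => by have := hins i hi; omega,
          fun i him => hinx i (by omega)⟩
      · intro S x hVF hins hinx
        exact hBeq S x hVF (fun i hi => lt_of_lt_of_le i.isLt hd)
          (fun i him => absurd him (by have := i.isLt; omega))
      · refine le_trans hBnorm ?_
        exact Nat.mul_le_mul_right _ (Nat.mul_le_mul_right _ (by omega))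

/-! ### bridging to the subtype formulation -/

lemma coboundary_eq_dP {k : ℕ} (γ : CubFace d n k → ℤ) (f : CubFace d n (k+1)) :
    coboundary γ f =
    dP (fun S x => if h : S.card = k ∧ ∀ i ∈ S, (x i : ℕ) < n then γ ⟨(S, x), h⟩ else 0)
      f.1.1 f.1.2 := by
  classical
  set E : Coch d n :=
    fun S x => if h : S.card = k ∧ ∀ i ∈ S, (x i : ℕ) < n then γ ⟨(S, x), h⟩ else 0 with hE
  set F : Fin d → ℤ := fun j => sgn f.1.1 j *
    (E (f.1.1.erase j) (vshift f.1.2 j) - E (f.1.1.erase j) f.1.2) with hF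
  have hcard : ∀ i : Fin d, i ∈ f.1.1 → (f.1.1.erase i).card = k := fun i hi => by
    simp [Finset.card_erase_of_mem hi, f.2.1]
  have hval1 : ∀ i : Fin d, i ∈ f.1.1 →
      ∀ j ∈ f.1.1.erase i, ((vshift f.1.2 i j : Fin (n+1)) : ℕ) < n := fun i hi j hj => by
    have hji : j ≠ i := Finset.ne_of_mem_erase hj
    rw [vshift_ne _ hji]
    exact f.2.2 j (Finset.mem_of_mem_erase hj)
  have hval2 : ∀ i : Fin d, i ∈ f.1.1 →
      ∀ j ∈ f.1.1.erase i, ((f.1.2 j : Fin (n+1)) : ℕ) < n := fun i _ j hj =>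
    f.2.2 j (Finset.mem_of_mem_erase hj)
  unfold coboundary
  refine Eq.trans (Finset.sum_congr rfl ?_) (Finset.sum_attach f.1.1 F)
  intro i _
  have e1 : E (f.1.1.erase i.1) (vshift f.1.2 i.1) =
      γ ⟨(f.1.1.erase i.1, vshift f.1.2 i.1), ⟨hcard i.1 i.2, hval1 i.1 i.2⟩⟩ := by
    simp only [hE]
    rw [dif_pos ⟨hcard i.1 i.2, hval1 i.1 i.2⟩]
  have e2 : E (f.1.1.erase i.1) f.1.2 =
      γ ⟨(f.1.1.erase i.1, f.1.2), ⟨hcard i.1 i.2, hval2 i.1 i.2⟩⟩ := by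
    simp only [hE]
    rw [dif_pos ⟨hcard i.1 i.2, hval2 i.1 i.2⟩]
  rw [hF]
  simp only []
  rw [e1, e2]
  rfl

lemma norm_restrict_le (B : Coch d n) (j : ℕ) :
    cochainNorm (fun f : CubFace d n j => B f.1.1 f.1.2) ≤ normP B := by
  classical
  have hinj : Function.Injective
      (Subtype.val : CubFace d n j → Finset (Fin d) × Pt d n) := Subtype.val_injective
  have h2 := Finset.sum_image (s := (Finset.univ : Finset (CubFace d n j)))
    (f := fun p : Finset (Fin d) × Pt d n => (B p.1 p.2).natAbs)
    (g := (Subtype.val : CubFace d n j → Finset (Fin d) × Pt d n)) (fun a _ b _ h => hinj h)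
  calc cochainNorm (fun f : CubFace d n j => B f.1.1 f.1.2)
      = ∑ p ∈ (Finset.univ : Finset (CubFace d n j)).image Subtype.val,
          (B p.1 p.2).natAbs := h2.symm
    _ ≤ ∑ p : Finset (Fin d) × Pt d n, (B p.1 p.2).natAbs :=
        Finset.sum_le_sum_of_subset (Finset.subset_univ _)
    _ = normP B :=
        Fintype.sum_prod_type (f := fun p : Finset (Fin d) × Pt d n => (B p.1 p.2).natAbs)

lemma norm_ext_eq (j : ℕ) (γ : CubFace d n j → ℤ) :
    normP (fun S x => if h : S.card = j ∧ ∀ i ∈ S, (x i : ℕ) < n then γ ⟨(S, x), h⟩ else 0) =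
    cochainNorm γ := by
  classical
  set E : Coch d n :=
    fun S x => if h : S.card = j ∧ ∀ i ∈ S, (x i : ℕ) < n then γ ⟨(S, x), h⟩ else 0 with hE
  have hinj : Function.Injective
      (Subtype.val : CubFace d n j → Finset (Fin d) × Pt d n) := Subtype.val_injective
  have h1 : normP E = ∑ p : Finset (Fin d) × Pt d n, (E p.1 p.2).natAbs :=
    (Fintype.sum_prod_type (f := fun p : Finset (Fin d) × Pt d n => (E p.1 p.2).natAbs)).symm
  rw [h1]
  rw [← Finset.sum_subset (Finset.subset_univ
    ((Finset.univ : Finset (CubFace d n j)).image Subtype.val)) ?van]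
  case van =>
    intro p _ hp
    have hnv : ¬ (p.1.card = j ∧ ∀ i ∈ p.1, ((p.2 i : Fin (n+1)) : ℕ) < n) := by
      intro h
      exact hp (Finset.mem_image.2 ⟨⟨p, h⟩, Finset.mem_univ _, rfl⟩)
    simp only [hE]
    rw [dif_neg]
    · rfl
    · exact hnv
  have h2 := Finset.sum_image (s := (Finset.univ : Finset (CubFace d n j)))
    (f := fun p : Finset (Fin d) × Pt d n => (E p.1 p.2).natAbs)
    (g := (Subtype.val : CubFace d n j → Finset (Fin d) × Pt d n)) (fun a _ b _ h => hinj h)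
  refine h2.trans ?_
  unfold cochainNorm
  refine Finset.sum_congr rfl fun f _ => ?_
  simp only [hE]
  rw [dif_pos f.2]
  exact congrArg (fun y : ℤ => y.natAbs) (congrArg γ (Subtype.ext rfl))

end Filling


/-- **Filling inequality for cubical cochains on a cube** (Matdinov, Lemma 1).
Let `d ≥ 1`, `1 ≤ k+1 ≤ d`, `n ≥ 1`, and let `α` be a `(k+1)`-dimensional integer
cocycle (`δα = 0`) on the standard cubical partition of `{0,…,n}^d`.  Then there is a
`k`-dimensional integer cochain `β` with `δβ = α` and `|β| ≤ (d−(k+1)+1) · n · |α|`. -/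
theorem filling_inequality (d n k : ℕ) (hd : 1 ≤ d) (hk : k + 1 ≤ d) (hn : 1 ≤ n)
    (α : CubFace d n (k + 1) → ℤ) (hα : coboundary α = 0) :
    ∃ β : CubFace d n k → ℤ, coboundary β = α ∧
      cochainNorm β ≤ (d - k) * n * cochainNorm α := by
  classical
  set A : Filling.Coch d n :=
    fun S x => if h : S.card = k + 1 ∧ ∀ i ∈ S, (x i : ℕ) < n then α ⟨(S, x), h⟩ else 0 with hA
  set z : Filling.Pt d n := fun _ => 0 with hz
  have hsupp : ∀ (S : Finset (Fin d)) (x : Filling.Pt d n), A S x ≠ 0 →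
      (S.card = k+1 ∧ ∀ i ∈ S, (x i : ℕ) < n) ∧ (∀ i ∈ S, (i:ℕ) < d) ∧
      (∀ i : Fin d, d ≤ (i:ℕ) → x i = z i) := by
    intro S x hne
    by_cases h : S.card = k + 1 ∧ ∀ i ∈ S, (x i : ℕ) < n
    · exact ⟨h, fun i _ => i.isLt, fun i him => absurd him (not_le.2 i.isLt)⟩
    · exfalso
      apply hne
      simp only [hA]
      rw [dif_neg h]
  have hcocy : ∀ (S : Finset (Fin d)) (x : Filling.Pt d n),
      (S.card = k+2 ∧ ∀ i ∈ S, (x i : ℕ) < n) → (∀ i ∈ S, (i:ℕ) < d) →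
      (∀ i : Fin d, d ≤ (i:ℕ) → x i = z i) → Filling.dP A S x = 0 := by
    intro S x hVF _ _
    have h1 := congrFun hα (⟨(S, x), hVF⟩ : CubFace d n (k+2))
    rw [Filling.coboundary_eq_dP α (⟨(S, x), hVF⟩ : CubFace d n (k+1+1))] at h1
    exact h1
  obtain ⟨B, hBsupp, hBeq, hBnorm⟩ := Filling.master k hn d hk z A hsupp hcocy
  refine ⟨fun f => B f.1.1 f.1.2, ?_, ?_⟩
  · funext f
    rw [Filling.coboundary_eq_dP (fun f => B f.1.1 f.1.2) f]
    have hEB : Filling.dP (fun S x => if h : S.card = k ∧ ∀ i ∈ S, (x i : ℕ) < n then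
        B S x else 0) f.1.1 f.1.2 = Filling.dP B f.1.1 f.1.2 := by
      unfold Filling.dP
      refine Finset.sum_congr rfl fun i hi => ?_
      have hc : (f.1.1.erase i).card = k := by
        simp [Finset.card_erase_of_mem hi, f.2.1]
      have hv1 : ∀ j ∈ f.1.1.erase i, ((vshift f.1.2 i j : Fin (n+1)) : ℕ) < n := by
        intro j hj
        rw [Filling.vshift_ne _ (Finset.ne_of_mem_erase hj)]
        exact f.2.2 j (Finset.mem_of_mem_erase hj)
      have hv2 : ∀ j ∈ f.1.1.erase i, ((f.1.2 j : Fin (n+1)) : ℕ) < n := fun j hj =>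
        f.2.2 j (Finset.mem_of_mem_erase hj)
      simp only []
      rw [dif_pos ⟨hc, hv1⟩, dif_pos ⟨hc, hv2⟩]
    have hEB' : Filling.dP (fun S x => if h : S.card = k ∧ ∀ i ∈ S, (x i : ℕ) < n then
        (fun f : CubFace d n k => B f.1.1 f.1.2) ⟨(S, x), h⟩ else 0) f.1.1 f.1.2 =
        Filling.dP (fun S x => if h : S.card = k ∧ ∀ i ∈ S, (x i : ℕ) < n then
        B S x else 0) f.1.1 f.1.2 := rfl
    rw [hEB', hEB, hBeq f.1.1 f.1.2 f.2 (fun i _ => i.isLt)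
      (fun i him => absurd him (not_le.2 i.isLt))]
    simp only [hA]
    rw [dif_pos f.2]
    exact congrArg α (Subtype.ext rfl)
  · calc cochainNorm (fun f : CubFace d n k => B f.1.1 f.1.2) ≤ Filling.normP B :=
        Filling.norm_restrict_le B k
      _ ≤ (d - k) * n * Filling.normP A := hBnorm
      _ = (d - k) * n * cochainNorm α := by
          rw [show Filling.normP A = cochainNorm α from Filling.norm_ext_eq (k+1) α]
end

section
/- Let d ≥ 1, M ≥ 0 and k ≥ 0 be integers and let S be a subset of the lattice cube ({0,1,…,M})^d ⊆ ℤ^d. If the affine span of S in ℚ^d (equivalently, ℝ^d) has dimension at most k, then |S| ≤ (M+1)^k. -/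
/-- A set of lattice points of the cube `{0,…,M}^d ⊆ ℤ^d` whose affine span in `ℚ^d`
has dimension at most `k` has at most `(M+1)^k` points. -/
theorem card_le_of_affineSpan_dim_le
    (d M k : ℕ) (hd : 1 ≤ d) (S : Set (Fin d → ℤ))
    (hS : ∀ x ∈ S, ∀ i, 0 ≤ x i ∧ x i ≤ M)
    (hdim : Module.finrank ℚ
        (affineSpan ℚ ((fun x : Fin d → ℤ => fun i => (x i : ℚ)) '' S)).direction ≤ k) :
    S.ncard ≤ (M + 1) ^ k := by
  classical
  set g : (Fin d → ℤ) → (Fin d → ℚ) := fun x i => (x i : ℚ) with hg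
  set V : Submodule ℚ (Fin d → ℚ) := (affineSpan ℚ (g '' S)).direction with hV
  -- coordinate functionals restricted to V
  let φ : Fin d → Module.Dual ℚ V := fun i => (LinearMap.proj i).comp V.subtype
  have hspan : Submodule.span ℚ (Set.range φ) = ⊤ := by
    rw [eq_top_iff]
    rintro ψ -
    obtain ⟨ψ', hψ'⟩ := LinearMap.exists_extend ψ
    have hψeq : ψ = ∑ i, ψ' (fun j => if i = j then 1 else 0) • φ i := by
      ext v
      have := LinearMap.pi_apply_eq_sum_univ ψ' (v : Fin d → ℚ)
      have hv : ψ v = ψ' (v : Fin d → ℚ) := by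
        rw [← hψ']; rfl
      rw [hv, this]
      simp [φ, mul_comm]
    rw [hψeq]
    exact Submodule.sum_mem _ fun i _ =>
      Submodule.smul_mem _ _ (Submodule.subset_span ⟨i, rfl⟩)
  obtain ⟨b, hbsub, hbspan, hbli⟩ := exists_linearIndependent ℚ (Set.range φ)
  rw [hspan] at hbspan
  have hbfin : b.Finite := by
    haveI : FiniteDimensional ℚ V := inferInstance
    exact hbli.setFinite
  haveI : Fintype b := hbfin.fintype
  -- card of b = finrank V ≤ k
  have hcard : Fintype.card b ≤ k := by
    have h1 : Module.finrank ℚ (Submodule.span ℚ b) = b.toFinset.card :=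
      finrank_span_set_eq_card hbli
    rw [hbspan, finrank_top] at h1
    rw [Subspace.dual_finrank_eq, Set.toFinset_card] at h1
    omega
  -- choose coordinates
  have hchoose : ∀ y : b, ∃ i : Fin d, φ i = (y : Module.Dual ℚ V) := fun y => hbsub y.2
  choose idx hidx using hchoose
  -- the injective map S → (b → Fin (M+1))
  have hmem : ∀ x : S, g x ∈ affineSpan ℚ (g '' S) := fun x =>
    subset_affineSpan ℚ _ ⟨x.1, x.2, rfl⟩
  let F : S → (b → Fin (M + 1)) := fun x y =>
    ⟨(x.1 (idx y)).toNat, by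
      have := hS x.1 x.2 (idx y); omega⟩
  have hFinj : Function.Injective F := by
    intro x x' h
    have hcoord : ∀ y : b, x.1 (idx y) = x'.1 (idx y) := by
      intro y
      have := congrFun h y
      have h2 : (x.1 (idx y)).toNat = (x'.1 (idx y)).toNat := by
        simpa [F] using congrArg Fin.val this
      have b1 := hS x.1 x.2 (idx y)
      have b2 := hS x'.1 x'.2 (idx y)
      omega
    have hvmem : g x.1 - g x'.1 ∈ V := by
      have := AffineSubspace.vsub_mem_direction (hmem x) (hmem x')
      simpa using this
    set v : V := ⟨g x.1 - g x'.1, hvmem⟩ with hvdef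
    have hv0 : v = 0 := by
      rw [← Module.forall_dual_apply_eq_zero_iff ℚ v]
      intro ψ
      have hψ : ψ ∈ Submodule.span ℚ b := by rw [hbspan]; trivial
      induction hψ using Submodule.span_induction with
      | mem z hz =>
          have : φ (idx ⟨z, hz⟩) v = 0 := by
            have := hcoord ⟨z, hz⟩
            simp only [φ, LinearMap.comp_apply, LinearMap.proj_apply, Submodule.subtype_apply]
            show (v : Fin d → ℚ) (idx ⟨z, hz⟩) = 0
            simp [hvdef, g, this]
          rw [hidx ⟨z, hz⟩] at this; exact this
      | zero => simp
      | add f1 f2 _ _ h1 h2 => simp [h1, h2]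
      | smul c f1 _ h1 => simp [h1]
    have hgx : g x.1 = g x'.1 := by
      have h0 : g x.1 - g x'.1 = 0 := congrArg Subtype.val hv0
      exact sub_eq_zero.mp h0
    apply Subtype.ext
    funext i
    have hc : (x.1 i : ℚ) = (x'.1 i : ℚ) := congrFun hgx i
    exact_mod_cast hc
  -- conclude
  haveI : Finite S := Finite.of_injective F hFinj
  have h1 : S.ncard = Nat.card S := rfl
  have h2 : Nat.card S ≤ Nat.card (b → Fin (M + 1)) :=
    Nat.card_le_card_of_injective F hFinj
  have h3 : Nat.card (b → Fin (M + 1)) = (M + 1) ^ Fintype.card b := by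
    simp [Nat.card_eq_fintype_card]
  calc S.ncard ≤ (M + 1) ^ Fintype.card b := by rw [h1, ← h3]; exact h2
    _ ≤ (M + 1) ^ k := Nat.pow_le_pow_right (by omega) hcard
end

section
/- Reflection-periodic extension preserves the face-coloring condition: fix integers d ≥ 1, 0 ≤ m ≤ d−1 and n ≥ 1. Define fold_n : ℤ → {0,…,n} by fold_n(t) = n − |n − r| where r ∈ {0,…,2n−1} is the residue of t modulo 2n. Let χ : ({0,…,n})^d → Colors be a coloring such that every cubical (m+1)-dimensional face of the grid {0,…,n}^d carries at most m+1 distinct colors on its vertices. Define χ̃ : ℤ^d → Colors by χ̃(x) = χ(fold_n(x_1),…,fold_n(x_d)). Then every cubical (m+1)-dimensional face of the full lattice ℤ^d carries at most m+1 distinct colors under χ̃. -/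
/-- The reflection-periodic folding map `ℤ → {0,…,n}`:
`fold n t = n − |n − r|` where `r ∈ {0,…,2n−1}` is the residue of `t` modulo `2n`. -/
def fold (n : ℕ) (t : ℤ) : ℤ := n - |(n : ℤ) - t % (2 * n)|

lemma fold_eq (n : ℕ) (hn : 1 ≤ n) (t : ℤ) :
    fold n t = if t % (2*(n:ℤ)) ≤ n then t % (2*(n:ℤ)) else 2*(n:ℤ) - t % (2*(n:ℤ)) := by
  have h0 : 0 ≤ t % (2*(n:ℤ)) := Int.emod_nonneg t (by positivity)
  have h1 : t % (2*(n:ℤ)) < 2*(n:ℤ) := Int.emod_lt_of_pos t (by positivity)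
  unfold fold
  split <;> rename_i h
  · rw [abs_of_nonneg (by omega)]; ring
  · rw [abs_of_neg (by omega)]; ring

lemma fold_bounds (n : ℕ) (hn : 1 ≤ n) (t : ℤ) : 0 ≤ fold n t ∧ fold n t ≤ n := by
  have h0 : 0 ≤ t % (2*(n:ℤ)) := Int.emod_nonneg t (by positivity)
  have h1 : t % (2*(n:ℤ)) < 2*(n:ℤ) := Int.emod_lt_of_pos t (by positivity)
  rw [fold_eq n hn]; split <;> omega

lemma fold_succ (n : ℕ) (hn : 1 ≤ n) (t : ℤ) :
    fold n (t+1) = fold n t + 1 ∨ fold n (t+1) = fold n t - 1 := by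
  have h0 : 0 ≤ t % (2*(n:ℤ)) := Int.emod_nonneg t (by positivity)
  have h1 : t % (2*(n:ℤ)) < 2*(n:ℤ) := Int.emod_lt_of_pos t (by positivity)
  have h2 : (t+1) % (2*(n:ℤ)) =
      if t % (2*(n:ℤ)) + 1 < 2*(n:ℤ) then t % (2*(n:ℤ)) + 1 else 0 := by
    have : (t+1) % (2*(n:ℤ)) = (t % (2*(n:ℤ)) + 1 % (2*(n:ℤ))) % (2*(n:ℤ)) := Int.add_emod t 1 _
    rw [this, Int.emod_eq_of_lt (by omega) (by omega : (1:ℤ) < 2*(n:ℤ))]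
    split <;> rename_i h
    · exact Int.emod_eq_of_lt (by omega) h
    · have : t % (2*(n:ℤ)) + 1 = 2*(n:ℤ) := by omega
      rw [this, Int.emod_self]
  rw [fold_eq n hn, fold_eq n hn, h2]
  split_ifs <;> omega

/-- **Reflection-periodic extension preserves the face-coloring condition**
(Matdinov, proof of Corollary 1). Let `d ≥ 1`, `0 ≤ m ≤ d−1`, `n ≥ 1` and let `χ` be a
coloring of the grid `{0,…,n}^d` (encoded on integer points) such that every cubical
`(m+1)`-dimensional face of the grid carries at most `m+1` distinct colors.  Then the
coloring `χ̃(x) = χ(fold n x_1, …, fold n x_d)` of all of `ℤ^d` is such that every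
cubical `(m+1)`-dimensional face of `ℤ^d` carries at most `m+1` distinct colors. -/
theorem fold_coloring_face_condition
    (d m n : ℕ) (hd : 1 ≤ d) (hm : m ≤ d - 1) (hn : 1 ≤ n)
    (Colors : Type) (χ : (Fin d → ℤ) → Colors)
    (hgrid : ∀ (S : Finset (Fin d)) (x : Fin d → ℤ),
        S.card = m + 1 →
        (∀ i, 0 ≤ x i ∧ x i ≤ n) →
        (∀ i ∈ S, x i ≤ (n : ℤ) - 1) →
        {c : Colors | ∃ ε : Fin d → Bool,
            χ (fun i => x i + if i ∈ S ∧ ε i then 1 else 0) = c}.ncard ≤ m + 1) :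
    ∀ (S : Finset (Fin d)) (x : Fin d → ℤ),
      S.card = m + 1 →
      {c : Colors | ∃ ε : Fin d → Bool,
          χ (fun i => fold n (x i + if i ∈ S ∧ ε i then 1 else 0)) = c}.ncard ≤ m + 1 := by
  intro S x hS
  set g : Fin d → Bool := fun i => decide (fold n (x i + 1) = fold n (x i) - 1) with hgdef
  set y : Fin d → ℤ := fun i => if i ∈ S ∧ g i then fold n (x i + 1) else fold n (x i) with hydef
  have key : ∀ (ε : Fin d → Bool) (i : Fin d),
      fold n (x i + if i ∈ S ∧ ε i then 1 else 0)
        = y i + if i ∈ S ∧ xor (ε i) (g i) then 1 else 0 := by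
    intro ε i
    by_cases hi : i ∈ S
    · rcases fold_succ n hn (x i) with h | h
      · have hgi : g i = false := by simp only [hgdef, decide_eq_false_iff_not]; omega
        cases hε : ε i <;> simp [hydef, hi, hgi, hε] <;> omega
      · have hgi : g i = true := by simp only [hgdef, decide_eq_true_eq]; omega
        cases hε : ε i <;> simp [hydef, hi, hgi, hε] <;> omega
    · simp [hydef, hi]
  have hset : {c : Colors | ∃ ε : Fin d → Bool,
          χ (fun i => fold n (x i + if i ∈ S ∧ ε i then 1 else 0)) = c}
      = {c : Colors | ∃ ε : Fin d → Bool,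
          χ (fun i => y i + if i ∈ S ∧ ε i then 1 else 0) = c} := by
    ext c
    simp only [Set.mem_setOf_eq]
    constructor
    · rintro ⟨ε, rfl⟩
      exact ⟨fun i => xor (ε i) (g i), by congr 1; funext i; rw [key ε i]⟩
    · rintro ⟨ε, rfl⟩
      refine ⟨fun i => xor (ε i) (g i), ?_⟩
      congr 1; funext i
      have h := key (fun i => xor (ε i) (g i)) i
      rw [h]
      congr 1
      simp [Bool.xor_assoc]
  rw [hset]
  refine hgrid S y hS ?_ ?_
  · intro i
    have h1 := fold_bounds n hn (x i)
    have h2 := fold_bounds n hn (x i + 1)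
    simp only [hydef]; split <;> omega
  · intro i hi
    have h1 := fold_bounds n hn (x i)
    have h2 := fold_bounds n hn (x i + 1)
    rcases fold_succ n hn (x i) with h | h
    · have hgi : g i = false := by simp only [hgdef, decide_eq_false_iff_not]; omega
      simp only [hydef, hgi]; simp; omega
    · have hgi : g i = true := by simp only [hgdef, decide_eq_true_eq]; omega
      simp only [hydef, hgi]; simp [hi]; omega
end

section
/- Let X be a compact metric space, let m ≥ 0, and let (C_i)_{i∈I} be a finite family of closed subsets of X such that every point of X belongs to at most m+1 of the sets C_i. Then there exists ε > 0 such that every subset A ⊆ X of diameter less than ε meets at most m+1 of the sets C_i, i.e. |{i ∈ I : A ∩ C_i ≠ ∅}| ≤ m+1. -/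
/-- **Lebesgue-number lemma for closed families of bounded multiplicity**.
Let `X` be a compact metric space, `m ≥ 0`, and `(C_i)_{i∈I}` a finite family of closed
subsets of `X` such that every point of `X` belongs to at most `m+1` of the sets.  Then
there is an `ε > 0` such that every subset `A ⊆ X` of diameter less than `ε` meets at
most `m+1` of the sets `C_i`. -/
theorem exists_lebesgue_number_for_multiplicity
    (X : Type) [MetricSpace X] [CompactSpace X] (m : ℕ)
    (I : Type) [Fintype I] (C : I → Set X)
    (hclosed : ∀ i, IsClosed (C i))
    (hmult : ∀ x : X, {i | x ∈ C i}.ncard ≤ m + 1) :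
    ∃ ε : ℝ, 0 < ε ∧ ∀ A : Set X, Metric.diam A < ε →
      {i | (A ∩ C i).Nonempty}.ncard ≤ m + 1 := by
  set c : X → Set X := fun x => (⋃ i ∈ {i | x ∉ C i}, C i)ᶜ with hc
  have hopen : ∀ x, IsOpen (c x) := fun x =>
    ((Set.toFinite {i | x ∉ C i}).isClosed_biUnion (fun i _ => hclosed i)).isOpen_compl
  have hcover : Set.univ ⊆ ⋃ x : X, c x := by
    intro x _
    refine Set.mem_iUnion.2 ⟨x, ?_⟩
    simp only [hc, Set.mem_compl_iff, Set.mem_iUnion]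
    rintro ⟨i, hi, hxi⟩
    exact hi hxi
  obtain ⟨δ, hδ, hball⟩ := lebesgue_number_lemma_of_metric isCompact_univ hopen hcover
  refine ⟨δ, hδ, fun A hA => ?_⟩
  rcases A.eq_empty_or_nonempty with rfl | ⟨a, ha⟩
  · simp
  obtain ⟨x, hx⟩ := hball a (Set.mem_univ a)
  have hsub : A ⊆ c x := fun b hb => hx (by
    have : dist b a ≤ Metric.diam A := Metric.dist_le_diam_of_mem
      (isCompact_univ.isBounded.subset (Set.subset_univ A)) hb ha
    exact Metric.mem_ball.2 (lt_of_le_of_lt this hA))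
  have hsubset : {i | (A ∩ C i).Nonempty} ⊆ {i | x ∈ C i} := by
    intro i ⟨b, hbA, hbC⟩
    by_contra hxi
    have : b ∈ c x := hsub hbA
    simp only [hc, Set.mem_compl_iff, Set.mem_iUnion] at this
    exact this ⟨i, hxi, hbC⟩
  exact le_trans (Set.ncard_le_ncard hsubset (Set.toFinite _)) (hmult x)
end
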